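/- For a ≥ 7, the value of the irreducible character of S_{2a+4} indexed by β = (a+4, 6, 1^{a-6}) at the conjugacy class of cycle type (a, a-1, 4, 1) equals 0. -/

import Mathlib

/-!
The beta-set of `β = (a+4, 6, 1^{a-6})` is `{2a-1, a} ∪ {1, …, a-6}`, so an `a`-hook can only
be removed at `2a-1`, with leg length `1`, leaving `(5, 5, 1^{a-6})`, or at `a`, with leg
length `a-6`, leaving `(a+4)`. From `(5, 5, 1^{a-6})` the only removable `(a-1)`-hook is again
the one at its second beta-number, leaving `(5)` with sign `(-1)^{a-6}`, while `(a+4)` goes to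
`(5)` with sign `1`. The two contributions `-(-1)^{a-6} χ^{(5)}` and `(-1)^{a-6} χ^{(5)}`
cancel, whatever the remaining cycle type `(4, 1)`.
-/

def betaSet (l : List ℕ) : List ℕ :=
  (l.zipIdx.map Prod.swap).map (fun p => p.2 + (l.length - 1 - p.1))

def fromBeta (b : List ℕ) : List ℕ :=
  let s := List.insertionSort (· ≥ ·) b
  ((s.zipIdx.map Prod.swap).map (fun p => p.2 - (s.length - 1 - p.1))).filter (fun x => x ≠ 0)

def MN : List ℕ → List ℕ → ℤ
  | β, [] => if β = [] then 1 else 0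
  | β, q :: γ =>
      ((betaSet β).map (fun x =>
        if q ≤ x ∧ x - q ∉ betaSet β then
          (-1) ^ ((betaSet β).filter (fun y => x - q < y ∧ y < x)).length *
            MN (fromBeta ((x - q) :: (betaSet β).erase x)) γ
        else 0)).sum

def IsPartition (l : List ℕ) (m : ℕ) : Prop :=
  l.Pairwise (· ≥ ·) ∧ (∀ i ∈ l, 0 < i) ∧ l.sum = m

def conjugate (l : List ℕ) : List ℕ :=
  (List.range (l.foldr max 0)).map (fun i => (l.filter (fun p => i < p)).length)

def descRange (k : ℕ) : List ℕ := (List.range' 1 k).reverse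

lemma descRange_succ (k : ℕ) : descRange (k + 1) = (k + 1) :: descRange k := by
  simp [descRange, List.range'_concat, add_comm]

lemma mem_descRange {k x : ℕ} : x ∈ descRange k ↔ 1 ≤ x ∧ x ≤ k := by
  simp only [descRange, List.mem_reverse, List.mem_range'_1]
  omega

lemma length_descRange (k : ℕ) : (descRange k).length = k := by simp [descRange]

lemma pairwise_descRange (k : ℕ) : (descRange k).Pairwise (· > ·) := by
  simpa [descRange, List.pairwise_reverse] using List.pairwise_lt_range' (s := 1) (n := k)

lemma insertionSort_ge_eq_of_perm {α : Type*} [LinearOrder α] {l l' : List α} (hp : l.Perm l')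
    (hs : l'.Pairwise (· ≥ ·)) : l.insertionSort (· ≥ ·) = l' :=
  ((List.perm_insertionSort _ l).trans hp).eq_of_pairwise' (List.pairwise_insertionSort _ l) hs

lemma map_zipIdx_replicate_one {k m c : ℕ} (h : m + k = c + 1) :
    ((List.replicate k 1).zipIdx m).map (fun p => p.1 + (c - p.2)) = descRange k := by
  induction k generalizing m with
  | zero => rfl
  | succ k ih =>
    rw [List.replicate_succ, List.zipIdx_cons, List.map_cons, descRange_succ, ih (by omega)]
    congr 1
    omega

lemma betaSet_doubleHook (x y k : ℕ) :
    betaSet (x :: y :: List.replicate k 1) = (x + k + 1) :: (y + k) :: descRange k := by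
  simp only [betaSet, List.map_map, List.length_cons, List.length_replicate, List.zipIdx_cons,
    List.map_cons, Function.comp_def, Prod.fst_swap, Prod.snd_swap]
  rw [map_zipIdx_replicate_one (c := k + 1 + 1 - 1) (by omega)]
  grind

lemma betaSet_singleton (x : ℕ) : betaSet [x] = [x] := rfl

lemma fromBeta_eq_of_perm {l l' : List ℕ} (hp : l.Perm l') (hs : l'.Pairwise (· ≥ ·)) :
    fromBeta l = (l'.zipIdx.map (fun p => p.1 - (l'.length - 1 - p.2))).filter (· ≠ 0) := by
  simp only [fromBeta, insertionSort_ge_eq_of_perm hp hs, List.map_map, Function.comp_def,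
    Prod.fst_swap, Prod.snd_swap]

lemma map_zipIdx_descRange {k m c : ℕ} (h : m + k ≤ c + 1) :
    ((descRange k).zipIdx m).map (fun p => p.1 - (c - p.2)) = List.replicate k (m + k - c) := by
  induction k generalizing m with
  | zero => rfl
  | succ k ih =>
    rw [descRange_succ, List.zipIdx_cons, List.map_cons, List.replicate_succ, ih (by omega),
      show m + 1 + k - c = m + (k + 1) - c by omega]
    congr 1
    dsimp only
    omega

lemma fromBeta_cons_cons_descRange {u v k : ℕ} (hku : k < u) (huv : u < v) :
    fromBeta (u :: v :: descRange k) = (v - (k + 1)) :: (u - k) :: List.replicate k 1 := by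
  have hs : (v :: u :: descRange k).Pairwise (· ≥ ·) := by
    refine List.pairwise_cons.2
      ⟨?_, List.pairwise_cons.2 ⟨?_, (pairwise_descRange k).imp le_of_lt⟩⟩
    all_goals intro b hb; simp only [List.mem_cons, mem_descRange] at hb; omega
  rw [fromBeta_eq_of_perm (List.Perm.swap v u _) hs]
  have hmap : (v :: u :: descRange k).zipIdx.map
      (fun p => p.1 - ((v :: u :: descRange k).length - 1 - p.2)) =
      (v - (k + 1)) :: (u - k) :: List.replicate k 1 := by
    simp only [List.length_cons, length_descRange, List.zipIdx_cons, List.map_cons]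
    rw [map_zipIdx_descRange (c := k + 1 + 1 - 1) (by omega)]
    grind
  rw [hmap, List.filter_eq_self.2]
  simp only [List.mem_cons, List.mem_replicate, decide_eq_true_eq]
  omega

lemma fromBeta_zero_cons_descRange {v k : ℕ} (hv : k + 1 < v) :
    fromBeta (0 :: v :: descRange k) = [v - (k + 1)] := by
  have hs : (v :: (descRange k ++ [0])).Pairwise (· ≥ ·) := by
    simp only [List.pairwise_cons, List.pairwise_append, List.mem_append, List.mem_singleton,
      mem_descRange]
    refine ⟨by omega, (pairwise_descRange k).imp le_of_lt, by simp⟩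
  rw [fromBeta_eq_of_perm
    ((List.Perm.swap v 0 _).trans ((List.perm_append_singleton 0 _).symm.cons v)) hs]
  have hmap : (v :: (descRange k ++ [0])).zipIdx.map
      (fun p => p.1 - ((v :: (descRange k ++ [0])).length - 1 - p.2)) =
      (v - (k + 1)) :: (List.replicate k 0 ++ [0]) := by
    simp only [List.length_cons, List.length_append, List.length_nil, length_descRange,
      List.zipIdx_cons, List.zipIdx_append, List.map_cons, List.map_append]
    rw [map_zipIdx_descRange (c := k + 1 + 1 - 1) (by omega)]
    grind
  rw [hmap, List.filter_cons_of_pos (by simp only [ne_eq, decide_eq_true_eq]; omega),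
    List.filter_eq_nil_iff.2 (by simp only [List.mem_append, List.mem_replicate,
      List.mem_singleton, ne_eq, decide_eq_true_eq]; omega)]

lemma fromBeta_singleton {x : ℕ} (hx : x ≠ 0) : fromBeta [x] = [x] := by
  simp [fromBeta, hx]

def mnTerm (B : List ℕ) (q : ℕ) (γ : List ℕ) (x : ℕ) : ℤ :=
  if q ≤ x ∧ x - q ∉ B then
    (-1) ^ (B.filter (fun y => x - q < y ∧ y < x)).length *
      MN (fromBeta ((x - q) :: B.erase x)) γ
  else 0

lemma MN_cons (β : List ℕ) (q : ℕ) (γ : List ℕ) :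
    MN β (q :: γ) = ((betaSet β).map (mnTerm (betaSet β) q γ)).sum := by
  rw [MN]
  rfl

lemma mnTerm_of_lt {B γ : List ℕ} {q x : ℕ} (h : x < q) : mnTerm B q γ x = 0 :=
  if_neg fun h' => by omega

lemma mnTerm_of_mem {B γ : List ℕ} {q x : ℕ} (h : x - q ∈ B) : mnTerm B q γ x = 0 :=
  if_neg fun h' => h'.2 h

lemma MN_singleton_cons {x q : ℕ} (γ : List ℕ) (hq : 0 < q) (hqx : q < x) :
    MN [x] (q :: γ) = MN [x - q] γ := by
  rw [MN_cons, betaSet_singleton, List.map_singleton, List.sum_singleton, mnTerm,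
    if_pos ⟨hqx.le, by simp only [List.mem_singleton]; omega⟩, List.filter_singleton,
    decide_eq_false (by omega), List.erase_cons_head, fromBeta_singleton (by omega)]
  simp

lemma MN_doubleHook_cons {x y k q : ℕ} (γ : List ℕ) (hkq : k < q) :
    MN (x :: y :: List.replicate k 1) (q :: γ) =
      mnTerm (betaSet (x :: y :: List.replicate k 1)) q γ (x + k + 1) +
        mnTerm (betaSet (x :: y :: List.replicate k 1)) q γ (y + k) := by
  rw [MN_cons, betaSet_doubleHook, List.map_cons, List.map_cons, List.sum_cons, List.sum_cons,
    List.sum_eq_zero, add_zero]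
  simp only [List.mem_map, mem_descRange]
  rintro _ ⟨z, hz, rfl⟩
  exact mnTerm_of_lt (by omega)

lemma mnTerm_doubleHook_firstRow_eq_zero {x y k q : ℕ} (γ : List ℕ) (hxq : x < q)
    (hqx : q ≤ x + k) :
    mnTerm (betaSet (x :: y :: List.replicate k 1)) q γ (x + k + 1) = 0 :=
  mnTerm_of_mem <| by
    rw [betaSet_doubleHook]
    simp only [List.mem_cons, mem_descRange]
    omega

lemma mnTerm_doubleHook_firstRow {x y k q : ℕ} (γ : List ℕ) (hyx : y ≤ x) (hqx : q ≤ x)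
    (hxq : x + 1 < q + y) :
    mnTerm (betaSet (x :: y :: List.replicate k 1)) q γ (x + k + 1) =
      -MN ((y - 1) :: (x + 1 - q) :: List.replicate k 1) γ := by
  have hleg : ((x + k + 1) :: (y + k) :: descRange k).filter
      (fun z => x + k + 1 - q < z ∧ z < x + k + 1) = [y + k] := by
    rw [List.filter_cons_of_neg (by simp),
      List.filter_cons_of_pos (by simp only [decide_eq_true_eq]; omega),
      List.filter_eq_nil_iff.2]
    intro z hz
    simp only [mem_descRange] at hz
    simp only [decide_eq_true_eq]
    omega
  rw [betaSet_doubleHook, mnTerm, if_pos, hleg, List.erase_cons_head,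
    fromBeta_cons_cons_descRange (by omega) (by omega), List.length_singleton, pow_one,
    show y + k - (k + 1) = y - 1 by omega, show x + k + 1 - q - k = x + 1 - q by omega, neg_one_mul]
  refine ⟨by omega, ?_⟩
  simp only [List.mem_cons, mem_descRange]
  omega

lemma mnTerm_doubleHook_secondRow {x y k q : ℕ} (γ : List ℕ) (hyx : y ≤ x) (hy : 0 < y)
    (hq : y + k = q) :
    mnTerm (betaSet (x :: y :: List.replicate k 1)) q γ (y + k) = (-1) ^ k * MN [x] γ := by
  subst hq
  have hleg : ((x + k + 1) :: (y + k) :: descRange k).filter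
      (fun z => y + k - (y + k) < z ∧ z < y + k) = descRange k := by
    rw [List.filter_cons_of_neg (by simp only [decide_eq_true_eq]; omega),
      List.filter_cons_of_neg (by simp),
      List.filter_eq_self.2]
    intro z hz
    simp only [mem_descRange] at hz
    simp only [decide_eq_true_eq]
    omega
  rw [betaSet_doubleHook, mnTerm, if_pos, hleg, length_descRange, Nat.sub_self,
    List.erase_cons_tail (by simp only [beq_iff_eq]; omega), List.erase_cons_head,
    fromBeta_zero_cons_descRange (by omega), show x + k + 1 - (k + 1) = x by omega]
  refine ⟨le_rfl, ?_⟩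
  simp only [List.mem_cons, mem_descRange]
  omega

/-- For `a ≥ 7`, the irreducible character of `S_{2a+4}` indexed by
`β = (a+4, 6, 1^{a-6})` vanishes at the class of cycle type `(a, a-1, 4, 1)`. -/
theorem stmt_10 (a : ℕ) (ha : 7 ≤ a) :
    MN ((a + 4) :: 6 :: List.replicate (a - 6) 1) [a, a - 1, 4, 1] = 0 := by
  have hdoubleHook : MN (5 :: 5 :: List.replicate (a - 6) 1) [a - 1, 4, 1] =
      (-1) ^ (a - 6) * MN [5] [4, 1] := by
    rw [MN_doubleHook_cons _ (by omega), mnTerm_doubleHook_firstRow_eq_zero _ (by omega) (by omega),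
      mnTerm_doubleHook_secondRow _ le_rfl (by omega) (by omega), zero_add]
  have hrow : MN [a + 4] [a - 1, 4, 1] = MN [5] [4, 1] := by
    rw [MN_singleton_cons _ (by omega) (by omega), show a + 4 - (a - 1) = 5 by omega]
  rw [MN_doubleHook_cons _ (by omega),
    mnTerm_doubleHook_firstRow _ (by omega) (by omega) (by omega),
    mnTerm_doubleHook_secondRow _ (by omega) (by omega) (by omega),
    show a + 4 + 1 - a = 5 by omega, show (6 - 1 : ℕ) = 5 from rfl, hdoubleHook, hrow]
  ring
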